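/- arXiv:0812.3120 — 4 statements merged into one kernel-verified Lean document; each statement's English description precedes it below -/
import Mathlib

section
/- Let Y₁ ~ Gamma(N, 1) (chi-square with 2N degrees of freedom, scaled) and Y₂ ~ Exponential(1) be independent, and let η₁ ≠ η₂ be positive reals. Then X = η₁Y₁ + η₂Y₂ has cdf F_X(x) = 1 - (η₂/(η₂-η₁))^N e^{-x/η₂} + e^{-x/η₁} (η₁/(η₂-η₁)) Σ_{i=0}^{N-1} Σ_{l=0}^{i} (1/(i-l)!) (η₂/(η₂-η₁))^{N-1-i} (x/η₁)^{i-l} for x ≥ 0. -/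
/-!
Conditioning on `Y₁ = y`, the event becomes `Y₂ ≤ (x - η₁ y) / η₂`, so the probability is
`∫₀^T f(y) (1 - e^{-(x - η₁ y)/η₂}) dy` with `T = x / η₁` and `f` the Gamma(N, 1) density
(beyond `T` the cdf of `Y₂` vanishes while the formula `1 - e^{…}` turns negative). Since
`e^{-y} e^{-(x - η₁ y)/η₂} = e^{-x/η₂} e^{-y/b}` with `b = η₂ / (η₂ - η₁)` (possibly negative),
both halves are incomplete gamma integrals
`∫₀^T yⁿ e^{-y/b} dy / n! = bⁿ⁺¹ (1 - e^{-T/b} ∑_{k ≤ n} (T/b)ᵏ / k!)`.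
What remains is `∑_{k < N} (b^{N-k} - 1) Tᵏ / k!`, and summation by parts (a geometric sum in `b`)
turns it into `b - 1 = η₁ / (η₂ - η₁)` times the double sum of the statement.
-/

open MeasureTheory ProbabilityTheory Real Set Finset
open scoped Nat

theorem hasDerivAt_neg_exp_neg_mul_sum_pow_div_factorial (n : ℕ) (t : ℝ) :
    HasDerivAt (fun s => -(exp (-s) * ∑ k ∈ range (n + 1), s ^ k / k !))
      (t ^ n * exp (-t) / n !) t := by
  induction n with
  | zero => simpa using (hasDerivAt_neg t).exp.fun_neg
  | succ n ih =>
    have hterm :=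
      (hasDerivAt_neg t).exp.fun_mul ((hasDerivAt_pow (n + 1) t).div_const ((n + 1)! : ℝ))
    have hsplit : (fun s => -(exp (-s) * ∑ k ∈ range (n + 1 + 1), s ^ k / k !))
        = fun s => -(exp (-s) * ∑ k ∈ range (n + 1), s ^ k / k !)
          - exp (-s) * (s ^ (n + 1) / (n + 1)!) := by
      ext s; rw [sum_range_succ]; ring
    rw [hsplit]
    refine (ih.fun_sub hterm).congr_deriv ?_
    rw [Nat.factorial_succ]; push_cast; field_simp; ring

theorem integral_pow_mul_exp_neg_div_factorial (n : ℕ) (T : ℝ) :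
    ∫ t in (0 : ℝ)..T, t ^ n * exp (-t) / n !
      = 1 - exp (-T) * ∑ k ∈ range (n + 1), T ^ k / k ! := by
  rw [intervalIntegral.integral_eq_sub_of_hasDerivAt
    (fun t _ => hasDerivAt_neg_exp_neg_mul_sum_pow_div_factorial n t)
    ((by fun_prop : Continuous fun t : ℝ => t ^ n * exp (-t) / n !).intervalIntegrable _ _)]
  have hsum_zero : ∑ k ∈ range (n + 1), (0 : ℝ) ^ k / k ! = 1 := by simp [sum_range_succ']
  rw [hsum_zero, neg_zero, exp_zero]
  ring

theorem integral_pow_mul_exp_neg_div_div_factorial (n : ℕ) {b : ℝ} (hb : b ≠ 0) (T : ℝ) :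
    ∫ y in (0 : ℝ)..T, y ^ n * exp (-(y / b)) / n !
      = b ^ (n + 1) * (1 - exp (-(T / b)) * ∑ k ∈ range (n + 1), (T / b) ^ k / k !) := by
  have hscale : ∀ y : ℝ,
      y ^ n * exp (-(y / b)) / n ! = b ^ n * ((y / b) ^ n * exp (-(y / b)) / n !) :=
    fun y => by rw [div_pow]; field_simp
  simp_rw [hscale]
  rw [intervalIntegral.integral_const_mul, intervalIntegral.integral_comp_div
    (fun t => t ^ n * exp (-t) / n !) hb, zero_div, integral_pow_mul_exp_neg_div_factorial,
    smul_eq_mul]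
  ring

theorem sub_one_mul_sum_pow_mul_sum_range_succ (b : ℝ) (t : ℕ → ℝ) (N : ℕ) :
    (b - 1) * ∑ i ∈ range N, b ^ (N - 1 - i) * ∑ k ∈ range (i + 1), t k
      = ∑ k ∈ range N, (b ^ (N - k) - 1) * t k := by
  induction N with
  | zero => simp
  | succ N ih =>
    have hpow : ∀ i ∈ range N, b ^ (N - i) * ∑ k ∈ range (i + 1), t k
        = b * (b ^ (N - 1 - i) * ∑ k ∈ range (i + 1), t k) := fun i hi => by
      rw [← mul_assoc, ← pow_succ']; congr 2; have := mem_range.1 hi; omega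
    have hpow' : ∀ k ∈ range N,
        (b ^ (N + 1 - k) - 1) * t k = b * ((b ^ (N - k) - 1) * t k) + (b - 1) * t k :=
      fun k hk => by
        rw [show N + 1 - k = N - k + 1 by have := mem_range.1 hk; omega, pow_succ]; ring
    rw [sum_range_succ, Nat.add_sub_cancel, Nat.sub_self, sum_congr rfl hpow, ← mul_sum,
      sum_range_succ _ N, sum_range_succ (fun k => (b ^ (N + 1 - k) - 1) * t k),
      sum_congr rfl hpow', sum_add_distrib, ← mul_sum, ← mul_sum, ← ih]
    simp only [Nat.add_sub_cancel_left, pow_zero, pow_one]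
    ring

theorem integral_pow_mul_exp_neg_div_factorial_mul_one_sub_exp {N : ℕ} (hN : 1 ≤ N)
    {η₁ η₂ : ℝ} (hη₁ : η₁ ≠ 0) (hη₂ : η₂ ≠ 0) (hne : η₁ ≠ η₂) (x : ℝ) :
    ∫ y in 0..x / η₁, y ^ (N - 1) * exp (-y) / (N - 1)! * (1 - exp (-((x - η₁ * y) / η₂)))
      = 1 - (η₂ / (η₂ - η₁)) ^ N * exp (-x / η₂)
        + exp (-x / η₁) * (η₁ / (η₂ - η₁)) *
          ∑ i ∈ range N, ∑ l ∈ range (i + 1),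
            (1 / ((i - l)! : ℝ)) * (η₂ / (η₂ - η₁)) ^ (N - 1 - i) * (x / η₁) ^ (i - l) := by
  obtain ⟨n, rfl⟩ := Nat.exists_eq_add_of_le' hN
  have hsub : η₂ - η₁ ≠ 0 := sub_ne_zero.2 hne.symm
  set b := η₂ / (η₂ - η₁) with hb_def
  set T := x / η₁ with hT_def
  have hb : b ≠ 0 := div_ne_zero hη₂ hsub
  have hb_sub_one : η₁ / (η₂ - η₁) = b - 1 := by rw [hb_def]; field_simp; ring
  have hexp_T : exp (-T) = exp (-x / η₁) := by rw [neg_div]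
  have hexp_T_div_b : exp (-x / η₂) * exp (-(T / b)) = exp (-x / η₁) := by
    rw [← exp_add, hT_def, hb_def]; congr 1; field_simp; ring
  have hsplit : ∀ y, y ^ n * exp (-y) / n ! * (1 - exp (-((x - η₁ * y) / η₂)))
      = (y ^ n * exp (-y) / n !) - exp (-x / η₂) * (y ^ n * exp (-(y / b)) / n !) := fun y => by
    have : exp (-y) * exp (-((x - η₁ * y) / η₂)) = exp (-x / η₂) * exp (-(y / b)) := by
      rw [← exp_add, ← exp_add, hb_def]; congr 1; field_simp; ring
    linear_combination (-(y ^ n / n !)) * this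
  have hinner : ∀ i ∈ range (n + 1), ∑ l ∈ range (i + 1),
      (1 / ((i - l)! : ℝ)) * b ^ (n - i) * T ^ (i - l)
        = b ^ (n - i) * ∑ k ∈ range (i + 1), T ^ k / k ! := fun i _ => by
    rw [mul_sum, ← sum_range_reflect (fun k => b ^ (n - i) * (T ^ k / k !))]
    exact sum_congr rfl fun l _ => by simp only [Nat.add_sub_cancel]; ring
  have hpartial := sub_one_mul_sum_pow_mul_sum_range_succ b (fun k => T ^ k / k !) (n + 1)
  simp only [Nat.add_sub_cancel] at hpartial ⊢
  have hrescale : b ^ (n + 1) * ∑ k ∈ range (n + 1), (T / b) ^ k / k !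
      = ∑ k ∈ range (n + 1), b ^ (n + 1 - k) * (T ^ k / k !) := by
    rw [mul_sum]
    refine sum_congr rfl fun k hk => ?_
    rw [pow_sub₀ _ hb (mem_range.1 hk).le]
    field_simp
    rw [← mul_pow, div_mul_cancel₀ T hb]
  have hdiff : ∑ k ∈ range (n + 1), (b ^ (n + 1 - k) - 1) * (T ^ k / k !)
      = ∑ k ∈ range (n + 1), b ^ (n + 1 - k) * (T ^ k / k !)
        - ∑ k ∈ range (n + 1), T ^ k / k ! := by
    rw [← sum_sub_distrib]; exact sum_congr rfl fun _ _ => by ring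
  simp only [hsplit]
  rw [intervalIntegral.integral_sub ((by fun_prop : Continuous _).intervalIntegrable _ _)
      ((by fun_prop : Continuous _).intervalIntegrable _ _),
    intervalIntegral.integral_const_mul, integral_pow_mul_exp_neg_div_factorial,
    integral_pow_mul_exp_neg_div_div_factorial n hb, sum_congr rfl hinner, hb_sub_one, mul_assoc,
    hpartial, hdiff, ← hrescale, hexp_T, ← hexp_T_div_b]
  ring

theorem gammaPDFReal_natCast {N : ℕ} (hN : 1 ≤ N) (r y : ℝ) :
    gammaPDFReal N r y
      = if 0 ≤ y then r ^ N * y ^ (N - 1) * exp (-(r * y)) / (N - 1)! else 0 := by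
  obtain ⟨n, rfl⟩ := Nat.exists_eq_add_of_le' hN
  have hexp : ((n + 1 : ℕ) : ℝ) - 1 = n := by push_cast; ring
  rw [gammaPDFReal, hexp, rpow_natCast, rpow_natCast, Nat.cast_succ, Real.Gamma_nat_eq_factorial,
    Nat.add_sub_cancel]
  split_ifs <;> ring

theorem expMeasure_Iic {r : ℝ} (hr : 0 < r) (c : ℝ) :
    expMeasure r (Iic c) = ENNReal.ofReal (1 - exp (-(r * c))) := by
  rw [expMeasure, gammaMeasure, withDensity_apply _ measurableSet_Iic]
  refine (lintegral_exponentialPDF_eq_antiDeriv hr c).trans ?_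
  split_ifs with hc
  · rfl
  · rw [ENNReal.ofReal_zero, eq_comm, ENNReal.ofReal_eq_zero, sub_nonpos, one_le_exp_iff]
    nlinarith

theorem ProbabilityTheory.IndepFun.measure_mul_add_mul_le {Ω : Type*} [MeasurableSpace Ω]
    {P : Measure Ω} {X Y : Ω → ℝ} (hXY : X ⟂ᵢ[P] Y) (hX : AEMeasurable X P)
    (hY : AEMeasurable Y P) [SigmaFinite (P.map X)] [SigmaFinite (P.map Y)]
    (a : ℝ) {b : ℝ} (hb : 0 < b) (x : ℝ) :
    P {ω | a * X ω + b * Y ω ≤ x} = ∫⁻ y, P.map Y (Iic ((x - a * y) / b)) ∂(P.map X) := by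
  have hS : MeasurableSet {p : ℝ × ℝ | a * p.1 + b * p.2 ≤ x} := by measurability
  have hslice : ∀ y,
      Prod.mk y ⁻¹' {p : ℝ × ℝ | a * p.1 + b * p.2 ≤ x} = Iic ((x - a * y) / b) := by
    intro y; ext z
    simp only [Set.mem_preimage, Set.mem_ofPred_eq, Set.mem_Iic, le_div_iff₀ hb]
    constructor <;> intro <;> linarith
  simp_rw [← hslice]
  rw [← Measure.prod_apply hS, ← (indepFun_iff_map_prod_eq_prod_map_map' hX hY ‹_› ‹_›).1 hXY,
    Measure.map_apply_of_aemeasurable (hX.prodMk hY) hS]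
  rfl

theorem lintegral_ofReal_ite_mul_ofReal_eq_intervalIntegral {f g : ℝ → ℝ} {T : ℝ} (hT : 0 ≤ T)
    (hf : ∀ y, 0 ≤ y → 0 ≤ f y) (hg : ∀ y ∈ Icc 0 T, 0 ≤ g y) (hg' : ∀ y, T < y → g y ≤ 0)
    (hfg : ContinuousOn (fun y => f y * g y) (Icc 0 T)) :
    ∫⁻ y, ENNReal.ofReal (if 0 ≤ y then f y else 0) * ENNReal.ofReal (g y)
      = ENNReal.ofReal (∫ y in 0..T, f y * g y) := by
  have hout : ∀ y ∉ Icc 0 T,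
      ENNReal.ofReal (if 0 ≤ y then f y else 0) * ENNReal.ofReal (g y) = 0 := by
    intro y hy
    rcases le_or_gt 0 y with h0 | h0
    · rw [ENNReal.ofReal_of_nonpos (hg' y (by simpa [h0] using hy)), mul_zero]
    · simp [not_le.2 h0]
  have hin : ∀ y ∈ Icc 0 T, ENNReal.ofReal (if 0 ≤ y then f y else 0) * ENNReal.ofReal (g y)
      = ENNReal.ofReal (f y * g y) := fun y hy => by
    rw [if_pos hy.1, ENNReal.ofReal_mul (hf y hy.1)]
  rw [← setLIntegral_eq_of_support_subset (fun y hy => by_contra fun h => hy (hout y h)),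
    setLIntegral_congr_fun measurableSet_Icc hin, ← ofReal_integral_eq_lintegral_ofReal
      hfg.integrableOn_Icc ((ae_restrict_iff' measurableSet_Icc).2 (.of_forall fun y hy =>
        mul_nonneg (hf y hy.1) (hg y hy))),
    integral_Icc_eq_integral_Ioc, intervalIntegral.integral_of_le hT]

theorem lintegral_expMeasure_Iic_gammaMeasure {N : ℕ} (hN : 1 ≤ N) {η₁ η₂ x : ℝ}
    (hη₁ : 0 < η₁) (hη₂ : 0 < η₂) (hx : 0 ≤ x) :
    ∫⁻ y, expMeasure 1 (Iic ((x - η₁ * y) / η₂)) ∂gammaMeasure N 1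
      = ENNReal.ofReal (∫ y in 0..x / η₁,
          y ^ (N - 1) * exp (-y) / (N - 1)! * (1 - exp (-((x - η₁ * y) / η₂)))) := by
  have hcdf_nonneg : ∀ y ∈ Icc 0 (x / η₁), 0 ≤ 1 - exp (-((x - η₁ * y) / η₂)) := fun y hy => by
    have := (le_div_iff₀ hη₁).1 hy.2
    rw [sub_nonneg, exp_le_one_iff, neg_nonpos]
    exact div_nonneg (by linarith) hη₂.le
  have hcdf_nonpos : ∀ y, x / η₁ < y → 1 - exp (-((x - η₁ * y) / η₂)) ≤ 0 := fun y hy => by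
    have := (div_lt_iff₀ hη₁).1 hy
    rw [sub_nonpos, one_le_exp_iff, neg_nonneg]
    exact div_nonpos_of_nonpos_of_nonneg (by linarith) hη₂.le
  simp only [expMeasure_Iic one_pos, one_mul]
  rw [gammaMeasure]
  unfold gammaPDF
  rw [lintegral_withDensity_eq_lintegral_mul _
      (measurable_gammaPDFReal _ _).ennreal_ofReal (by fun_prop)]
  simp only [gammaPDFReal_natCast hN, one_pow, one_mul, Pi.mul_apply]
  exact lintegral_ofReal_ite_mul_ofReal_eq_intervalIntegral (div_nonneg hx hη₁.le)
    (fun y hy => by positivity) hcdf_nonneg hcdf_nonpos (by fun_prop)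

theorem cdf_gamma_plus_exp_general
    {Ω : Type*} [MeasureSpace Ω]
    (N : ℕ) (hN : 1 ≤ N) (η₁ η₂ : ℝ) (hη₁ : 0 < η₁) (hη₂ : 0 < η₂) (hne : η₁ ≠ η₂)
    (Y₁ Y₂ : Ω → ℝ)
    (hY₁ : Measure.map Y₁ ℙ = volume.withDensity (fun y =>
        ENNReal.ofReal (if 0 ≤ y then y ^ (N - 1) * Real.exp (-y) / (Nat.factorial (N - 1)) else 0)))
    (hY₂ : Measure.map Y₂ ℙ = volume.withDensity (fun y =>
        ENNReal.ofReal (if 0 ≤ y then Real.exp (-y) else 0)))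
    (hIndep : IndepFun Y₁ Y₂ ℙ) :
    ∀ x : ℝ, 0 ≤ x →
      ℙ {ω | η₁ * Y₁ ω + η₂ * Y₂ ω ≤ x}
        = ENNReal.ofReal
            (1 - (η₂ / (η₂ - η₁)) ^ N * Real.exp (-x / η₂)
              + Real.exp (-x / η₁) * (η₁ / (η₂ - η₁)) *
                  ∑ i ∈ Finset.range N, ∑ l ∈ Finset.range (i + 1),
                    (1 / (Nat.factorial (i - l) : ℝ)) *
                      (η₂ / (η₂ - η₁)) ^ (N - 1 - i) * (x / η₁) ^ (i - l)) := by
  intro x hx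
  have hlaw₁ : Measure.map Y₁ ℙ = gammaMeasure N 1 := by
    rw [hY₁, gammaMeasure]
    congr with y
    simp [gammaPDF, gammaPDFReal_natCast hN]
  have hlaw₂ : Measure.map Y₂ ℙ = expMeasure 1 := by
    rw [hY₂, expMeasure, gammaMeasure]
    change _ = volume.withDensity (exponentialPDF 1)
    congr with y
    simp [exponentialPDF_eq]
  have : IsProbabilityMeasure (Measure.map Y₁ ℙ) :=
    hlaw₁ ▸ isProbabilityMeasure_gammaMeasure (by positivity) one_pos
  have : IsProbabilityMeasure (Measure.map Y₂ ℙ) := hlaw₂ ▸ isProbabilityMeasure_expMeasure one_pos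
  rw [hIndep.measure_mul_add_mul_le (.of_map_ne_zero (IsProbabilityMeasure.ne_zero (Measure.map Y₁ ℙ)))
      (.of_map_ne_zero (IsProbabilityMeasure.ne_zero (Measure.map Y₂ ℙ))) η₁ hη₂,
    hlaw₁, hlaw₂, lintegral_expMeasure_Iic_gammaMeasure hN hη₁ hη₂ hx,
    integral_pow_mul_exp_neg_div_factorial_mul_one_sub_exp hN hη₁.ne' hη₂.ne' hne]

/-- Cdf of `X = η₁Y₁ + η₂Y₂` where `Y₁ ~ Gamma(N,1)` and `Y₂ ~ Exp(1)` are
independent and `η₁ ≠ η₂` are positive reals. -/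
theorem cdf_gamma_plus_exp
    {Ω : Type*} [MeasureSpace Ω] [IsProbabilityMeasure (ℙ : Measure Ω)]
    (N : ℕ) (hN : 1 ≤ N) (η₁ η₂ : ℝ) (hη₁ : 0 < η₁) (hη₂ : 0 < η₂) (hne : η₁ ≠ η₂)
    (Y₁ Y₂ : Ω → ℝ)
    (hY₁ : Measure.map Y₁ ℙ = volume.withDensity (fun y =>
        ENNReal.ofReal (if 0 ≤ y then y ^ (N - 1) * Real.exp (-y) / (Nat.factorial (N - 1)) else 0)))
    (hY₂ : Measure.map Y₂ ℙ = volume.withDensity (fun y =>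
        ENNReal.ofReal (if 0 ≤ y then Real.exp (-y) else 0)))
    (hIndep : IndepFun Y₁ Y₂ ℙ) :
    ∀ x : ℝ, 0 ≤ x →
      ℙ {ω | η₁ * Y₁ ω + η₂ * Y₂ ω ≤ x}
        = ENNReal.ofReal
            (1 - (η₂ / (η₂ - η₁)) ^ N * Real.exp (-x / η₂)
              + Real.exp (-x / η₁) * (η₁ / (η₂ - η₁)) *
                  ∑ i ∈ Finset.range N, ∑ l ∈ Finset.range (i + 1),
                    (1 / (Nat.factorial (i - l) : ℝ)) *
                      (η₂ / (η₂ - η₁)) ^ (N - 1 - i) * (x / η₁) ^ (i - l)) :=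
  cdf_gamma_plus_exp_general N hN η₁ η₂ hη₁ hη₂ hne Y₁ Y₂ hY₁ hY₂ hIndep
end

section
/- With the setup of random vector quantization of an isotropic unit vector in ℂ^{N_t} using L = 2^B independent isotropic codewords, the expected squared angular distortion satisfies ((N_t-1)/N_t) · 2^{-B/(N_t-1)} ≤ E[sin²θ] ≤ 2^{-B/(N_t-1)}, where E[sin²θ] = 2^B Β(2^B, N_t/(N_t-1)). -/
/-!
With `n = 2 ^ B` and `t = 1 / (p - 1) ∈ (0, 1]`, the functional equation of `Γ` turns
`n Β(n, 1 + t)` into the finite product `∏_{k < n} (1 + k) / (1 + t + k)`. Bernoulli's inequality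
`(1 + x) ^ t ≤ 1 + t x` places the factor `(m + 1) / (m + 1 + t)` between `((m + 1) / (m + 2)) ^ t`
and `(m / (m + 1)) ^ t`, and both bounds telescope: the product is at most `(n + 1) ^ (-t)` and,
keeping the first factor `1 / (1 + t)` exact, at least `n ^ (-t) / (1 + t)`.
-/

open Real Finset

theorem Gamma_add_nat_eq_mul_prod {s : ℝ} (hs : 0 < s) (n : ℕ) :
    Gamma (s + n) = Gamma s * ∏ k ∈ range n, (s + k) := by
  induction n with
  | zero => simp
  | succ n ih =>
    rw [Nat.cast_succ, ← add_assoc, Gamma_add_one (by positivity), ih, prod_range_succ]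
    ring

theorem natCast_mul_Gamma_mul_Gamma_div_Gamma_add {n : ℕ} (hn : n ≠ 0) {s : ℝ} (hs : 0 < s) :
    n * (Gamma n * Gamma s / Gamma (n + s)) = ∏ k ∈ range n, (1 + k) / (s + k) := by
  have h_num : n * Gamma n = ∏ k ∈ range n, (1 + (k : ℝ)) := by
    rw [← Gamma_add_one (Nat.cast_ne_zero.mpr hn), add_comm,
      Gamma_add_nat_eq_mul_prod one_pos, Gamma_one, one_mul]
  have h_den : Gamma (n + s) = Gamma s * ∏ k ∈ range n, (s + k) := by
    rw [add_comm, Gamma_add_nat_eq_mul_prod hs]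
  have : Gamma s ≠ 0 := (Gamma_pos_of_pos hs).ne'
  rw [prod_div_distrib, ← h_num, h_den]
  field_simp

theorem div_add_le_rpow_div_add_one {a t : ℝ} (ha : 0 < a) (ht₀ : 0 ≤ t) (ht₁ : t ≤ 1) :
    a / (a + t) ≤ (a / (a + 1)) ^ t := by
  have h_bernoulli : (1 + a⁻¹) ^ t ≤ 1 + t * a⁻¹ :=
    rpow_one_add_le_one_add_mul_self (by linarith [inv_pos.mpr ha]) ht₀ ht₁
  have h₁ : 1 + a⁻¹ = (a / (a + 1))⁻¹ := by field_simp
  have h₂ : 1 + t * a⁻¹ = (a / (a + t))⁻¹ := by field_simp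
  rw [h₁, h₂, inv_rpow (by positivity)] at h_bernoulli
  exact (inv_le_inv₀ (by positivity) (by positivity)).mp h_bernoulli

theorem rpow_div_add_one_le_div_add {a t : ℝ} (ha : 0 < a) (ht₀ : 0 ≤ t) (ht₁ : t ≤ 1) :
    (a / (a + 1)) ^ t ≤ (a + 1) / (a + 1 + t) := by
  have h_bernoulli : (1 + -(a + 1)⁻¹) ^ t ≤ 1 + t * -(a + 1)⁻¹ := by
    refine rpow_one_add_le_one_add_mul_self ?_ ht₀ ht₁
    have : (a + 1)⁻¹ ≤ 1 := inv_le_one_of_one_le₀ (by linarith)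
    linarith
  have h_base : 1 + -(a + 1)⁻¹ = a / (a + 1) := by field_simp; ring
  -- with `c = a + 1`, clearing denominators leaves `(c - t)(c + t) ≤ c²`
  have h_tangent : 1 + t * -(a + 1)⁻¹ ≤ (a + 1) / (a + 1 + t) := by
    rw [le_div_iff₀ (by positivity)]
    field_simp
    nlinarith [sq_nonneg t]
  exact h_base ▸ h_bernoulli.trans h_tangent

theorem rpow_neg_mul_rpow_div_add_one {m : ℝ} (hm : 0 < m) (t : ℝ) :
    m ^ (-t) * (m / (m + 1)) ^ t = (m + 1) ^ (-t) := by
  rw [div_rpow hm.le (by positivity), rpow_neg hm.le, rpow_neg (by positivity)]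
  have : m ^ t ≠ 0 := (rpow_pos_of_pos hm t).ne'
  field_simp

theorem prod_div_add_le_rpow_neg {t : ℝ} (ht₀ : 0 ≤ t) (ht₁ : t ≤ 1) (n : ℕ) :
    ∏ k ∈ range n, (1 + k) / (1 + t + k) ≤ ((n : ℝ) + 1) ^ (-t) := by
  induction n with
  | zero => simp
  | succ n ih =>
    have h_term : (1 + n) / (1 + t + n) ≤ (((n : ℝ) + 1) / (n + 1 + 1)) ^ t := by
      rw [add_comm 1 t, add_assoc t, add_comm t, add_comm 1 (n : ℝ)]
      exact div_add_le_rpow_div_add_one (by positivity) ht₀ ht₁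
    rw [prod_range_succ, Nat.cast_succ, ← rpow_neg_mul_rpow_div_add_one (by positivity)]
    exact mul_le_mul ih h_term (by positivity) (by positivity)

theorem div_one_add_mul_rpow_neg_le_prod_div_add {t : ℝ} (ht₀ : 0 ≤ t) (ht₁ : t ≤ 1) {n : ℕ}
    (hn : n ≠ 0) :
    1 / (1 + t) * (n : ℝ) ^ (-t) ≤ ∏ k ∈ range n, (1 + k) / (1 + t + k) := by
  induction n, Nat.one_le_iff_ne_zero.mpr hn using Nat.le_induction with
  | base => simp
  | succ n hn₁ ih =>
    have h_term : ((n : ℝ) / (n + 1)) ^ t ≤ (1 + n) / (1 + t + n) := by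
      rw [add_comm 1 t, add_assoc t, add_comm t, add_comm 1 (n : ℝ)]
      exact rpow_div_add_one_le_div_add (by positivity) ht₀ ht₁
    rw [prod_range_succ, Nat.cast_succ, ← rpow_neg_mul_rpow_div_add_one (by positivity),
      ← mul_assoc]
    exact mul_le_mul (ih (by omega)) h_term (by positivity) (by positivity)

/-- The RVQ expected squared angular distortion `2^B Β(2^B, p/(p-1))`, with `p = N_t ≥ 2`
and `B ≥ 0` the number of feedback bits, is bounded as
`((p-1)/p) 2^{-B/(p-1)} ≤ 2^B Β(2^B, p/(p-1)) ≤ 2^{-B/(p-1)}`,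
where `Β(x,y) = Γ(x)Γ(y)/Γ(x+y)` is the Beta function. -/
theorem rvq_distortion_bounds (p B : ℕ) (hp : 2 ≤ p) :
    ((p : ℝ) - 1) / p * (2 : ℝ) ^ (-(B : ℝ) / ((p : ℝ) - 1))
        ≤ (2 : ℝ) ^ B *
            (Gamma ((2 : ℝ) ^ B) * Gamma ((p : ℝ) / ((p : ℝ) - 1))
              / Gamma ((2 : ℝ) ^ B + (p : ℝ) / ((p : ℝ) - 1)))
      ∧ (2 : ℝ) ^ B *
            (Gamma ((2 : ℝ) ^ B) * Gamma ((p : ℝ) / ((p : ℝ) - 1))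
              / Gamma ((2 : ℝ) ^ B + (p : ℝ) / ((p : ℝ) - 1)))
          ≤ (2 : ℝ) ^ (-(B : ℝ) / ((p : ℝ) - 1)) := by
  have hp₂ : (2 : ℝ) ≤ p := by exact_mod_cast hp
  have hp₁ : (p : ℝ) - 1 ≠ 0 := by linarith
  set t : ℝ := ((p : ℝ) - 1)⁻¹ with ht
  have ht₀ : 0 ≤ t := inv_nonneg.mpr (by linarith)
  have ht₁ : t ≤ 1 := inv_le_one_of_one_le₀ (by linarith)
  set n : ℕ := 2 ^ B
  have hn : n ≠ 0 := pow_ne_zero B two_ne_zero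
  have h_pow : (2 : ℝ) ^ B = n := by simp [n]
  have h_shape : (p : ℝ) / ((p : ℝ) - 1) = 1 + t := by rw [ht]; field_simp; ring
  have h_const : ((p : ℝ) - 1) / p = 1 / (1 + t) := by rw [← h_shape]; field_simp
  have h_rate : (2 : ℝ) ^ (-(B : ℝ) / ((p : ℝ) - 1)) = (n : ℝ) ^ (-t) := by
    rw [← h_pow, ← rpow_natCast, ← rpow_mul zero_le_two, ht, mul_neg, neg_div, div_eq_mul_inv]
  rw [h_const, h_rate, h_shape, h_pow,
    natCast_mul_Gamma_mul_Gamma_div_Gamma_add hn (by positivity)]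
  refine ⟨div_one_add_mul_rpow_neg_le_prod_div_add ht₀ ht₁ hn,
    (prod_div_add_le_rpow_neg ht₀ ht₁ n).trans ?_⟩
  exact rpow_le_rpow_of_nonpos (by positivity) (by linarith) (by linarith)
end

section
/- The ergodic capacity of a maximal-ratio beamforming system with N_t transmit antennas over i.i.d. Rayleigh fading satisfies E[log₂(1 + P‖h‖²)] = log₂(e) · e^{1/P} · Σ_{k=0}^{N_t-1} Γ(-k, 1/P)/P^k, where h ∈ ℂ^{N_t} is standard complex Gaussian (so ‖h‖² is Gamma(N_t,1)-distributed) and Γ(α,x) = ∫_x^∞ t^{α-1} e^{-t} dt is the upper incomplete gamma function. -/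
/-!
Write `a = 1/P`, `m = N_t - 1`, `J_m = ∫₀^∞ log(1 + P x) x^m e^{-x} dx` and
`T_k = ∫₀^∞ x^k e^{-x} / (x + a) dx`, so that the capacity is `J_m / (m! log 2)`.
Integrating by parts against `x^m e^{-x}` gives `J_m = T_m + m J_{m-1}`, hence
`J_m / m! = ∑_{k ≤ m} T_k / k!`. Splitting `x^{k+1} / (x + a) = x^k - a x^k / (x + a)` gives
`T_{k+1} = k! - a T_k`, and the shift `t = x + a` gives `T_0 = e^a Γ(0, a)`. Integrating
`t^{-k-1} e^{-t}` by parts gives the matching recursion `(k+1) Γ(-k-1, a) = a^{-k-1} e^{-a} - Γ(-k, a)`,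
so `T_k = e^a k! a^k Γ(-k, a)`.
-/

open MeasureTheory ProbabilityTheory Real Set
open scoped ProbabilityTheory

/-- The upper incomplete gamma function `Γ(-k, x) = ∫_x^∞ t^{-k-1} e^{-t} dt`
for a nonnegative integer `k` and `x > 0`. -/
noncomputable def upperIncGammaNegInt (k : ℕ) (x : ℝ) : ℝ :=
  ∫ t in Ioi x, t ^ (-(k : ℤ) - 1) * Real.exp (-t)

open Filter Topology
open scoped Nat

lemma integrableOn_zpow_mul_exp_neg_Ioi (n : ℤ) {a : ℝ} (ha : 0 < a) :
    IntegrableOn (fun t : ℝ => t ^ n * exp (-t)) (Ioi a) := by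
  refine integrable_of_isBigO_exp_neg one_half_pos (fun t ht => ?_) ?_
  · exact ((continuousAt_zpow₀ t n (Or.inl (ha.trans_le ht).ne')).mul
      (continuous_exp.comp continuous_neg).continuousAt).continuousWithinAt
  · refine ((isLittleO_zpow_exp_pos_mul_atTop n one_half_pos).isBigO.mul
      (Asymptotics.isBigO_refl (fun t : ℝ => exp (-t)) atTop)).congr_right fun t => ?_
    rw [← exp_add]
    ring_nf

lemma upperIncGammaNegInt_succ (k : ℕ) {a : ℝ} (ha : 0 < a) :
    (k + 1) * upperIncGammaNegInt (k + 1) a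
      = a ^ (-(k : ℤ) - 1) * exp (-a) - upperIncGammaNegInt k a := by
  set n : ℤ := -(k : ℤ) - 1
  have hn : -((k + 1 : ℕ) : ℤ) - 1 = n - 1 := by push_cast; ring
  have hderiv : ∀ t ∈ Ici a, HasDerivAt (fun t => t ^ n * exp (-t))
      (-((k + 1) * (t ^ (n - 1) * exp (-t))) - t ^ n * exp (-t)) t := by
    intro t ht
    refine ((hasDerivAt_zpow n t (Or.inl (ha.trans_le ht).ne')).fun_mul
      (hasDerivAt_neg t).exp).congr_deriv ?_
    simp only [n]
    push_cast
    ring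
  have hint₁ : IntegrableOn (fun t => -((k + 1) * (t ^ (n - 1) * exp (-t)))) (Ioi a) :=
    ((integrableOn_zpow_mul_exp_neg_Ioi _ ha).const_mul _).neg
  have hint₂ := integrableOn_zpow_mul_exp_neg_Ioi n ha
  have hlim : Tendsto (fun t : ℝ => t ^ n * exp (-t)) atTop (𝓝 0) := by
    simpa using (tendsto_zpow_atTop_zero (by omega)).mul tendsto_exp_neg_atTop_nhds_zero
  have h := integral_Ioi_of_hasDerivAt_of_tendsto' hderiv (hint₁.sub hint₂) hlim
  rw [integral_sub hint₁ hint₂, integral_neg, integral_const_mul] at h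
  rw [upperIncGammaNegInt, upperIncGammaNegInt, hn]
  linarith

lemma integrableOn_pow_mul_exp_neg_Ioi_zero (k : ℕ) :
    IntegrableOn (fun x : ℝ => x ^ k * exp (-x)) (Ioi 0) := by
  refine (GammaIntegral_convergent (Nat.cast_add_one_pos k)).congr_fun (fun x _ => ?_)
    measurableSet_Ioi
  simp [mul_comm]

lemma integral_pow_mul_exp_neg_Ioi_zero (k : ℕ) :
    ∫ x in Ioi (0 : ℝ), x ^ k * exp (-x) = k ! := by
  rw [← Gamma_nat_eq_factorial, Gamma_eq_integral (Nat.cast_add_one_pos k)]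
  refine setIntegral_congr_fun measurableSet_Ioi (fun x _ => ?_)
  simp [mul_comm]

lemma setIntegral_Ioi_comp_add_right (f : ℝ → ℝ) (a b : ℝ) :
    ∫ x in Ioi b, f (x + a) = ∫ x in Ioi (b + a), f x := by
  simpa using (measurePreserving_add_right volume a).setIntegral_preimage_emb
    (measurableEmbedding_addRight a) f (Ioi (b + a))

section ShiftedDenominator

variable {a : ℝ}

lemma integrableOn_pow_div_add_mul_exp_neg (k : ℕ) (ha : 0 < a) :
    IntegrableOn (fun x => x ^ k / (x + a) * exp (-x)) (Ioi 0) := by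
  refine ((integrableOn_pow_mul_exp_neg_Ioi_zero k).const_mul a⁻¹).mono' (by fun_prop) ?_
  filter_upwards [ae_restrict_mem measurableSet_Ioi] with x (hx : 0 < x)
  rw [norm_of_nonneg (by positivity), div_eq_mul_inv, mul_comm _ (x + a)⁻¹, mul_assoc]
  gcongr
  linarith

lemma integral_pow_div_add_mul_exp_neg (k : ℕ) (ha : 0 < a) :
    ∫ x in Ioi 0, x ^ k / (x + a) * exp (-x) = exp a * k ! * a ^ k * upperIncGammaNegInt k a := by
  induction k with
  | zero =>
    have h : ∀ x ∈ Ioi (0 : ℝ), x ^ 0 / (x + a) * exp (-x)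
        = exp a * ((x + a) ^ (-((0 : ℕ) : ℤ) - 1) * exp (-(x + a))) := by
      intro x _
      rw [neg_add, exp_add, exp_neg a]
      field_simp
      simp
    rw [setIntegral_congr_fun measurableSet_Ioi h, integral_const_mul,
      setIntegral_Ioi_comp_add_right (fun t => t ^ (-((0 : ℕ) : ℤ) - 1) * exp (-t)), zero_add]
    simp [upperIncGammaNegInt]
  | succ k ih =>
    have h : ∀ x ∈ Ioi (0 : ℝ), x ^ (k + 1) / (x + a) * exp (-x)
        = x ^ k * exp (-x) - a * (x ^ k / (x + a) * exp (-x)) := by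
      intro x (hx : 0 < x)
      field_simp
      ring
    rw [setIntegral_congr_fun measurableSet_Ioi h, integral_sub
      (integrableOn_pow_mul_exp_neg_Ioi_zero k)
      ((integrableOn_pow_div_add_mul_exp_neg k ha).const_mul a), integral_const_mul,
      integral_pow_mul_exp_neg_Ioi_zero, ih]
    have hrec := upperIncGammaNegInt_succ k ha
    have hpow : a ^ (-(k : ℤ) - 1) = (a ^ (k + 1))⁻¹ := by
      rw [← zpow_natCast, ← zpow_neg]
      push_cast
      ring_nf
    rw [hpow] at hrec
    have hexp : exp a * exp (-a) = 1 := by rw [← exp_add, add_neg_cancel, exp_zero]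
    have hinv : a ^ (k + 1) * (a ^ (k + 1))⁻¹ = 1 := mul_inv_cancel₀ (by positivity)
    push_cast [Nat.factorial_succ]
    linear_combination -(exp a * k ! * a ^ (k + 1)) * hrec - k ! * hexp
      - k ! * exp a * exp (-a) * hinv

end ShiftedDenominator

section LogIntegral

variable {P : ℝ}

lemma norm_log_one_add_mul_mul_pow_mul_exp_neg_le (m : ℕ) (hP : 0 ≤ P) {x : ℝ} (hx : 0 ≤ x) :
    ‖log (1 + P * x) * (x ^ m * exp (-x))‖ ≤ P * (x ^ (m + 1) * exp (-x)) := by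
  have hx' : 0 < 1 + P * x := by positivity
  rw [norm_of_nonneg (mul_nonneg (log_nonneg (by nlinarith)) (by positivity))]
  calc log (1 + P * x) * (x ^ m * exp (-x)) ≤ P * x * (x ^ m * exp (-x)) := by
        gcongr
        linarith [log_le_sub_one_of_pos hx']
    _ = P * (x ^ (m + 1) * exp (-x)) := by ring

lemma integrableOn_log_one_add_mul_mul_pow_mul_exp_neg (m : ℕ) (hP : 0 ≤ P) :
    IntegrableOn (fun x => log (1 + P * x) * (x ^ m * exp (-x))) (Ioi 0) := by
  refine ((integrableOn_pow_mul_exp_neg_Ioi_zero (m + 1)).const_mul P).mono' (by fun_prop) ?_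
  filter_upwards [ae_restrict_mem measurableSet_Ioi] with x (hx : 0 < x)
  exact norm_log_one_add_mul_mul_pow_mul_exp_neg_le m hP hx.le

lemma integral_log_one_add_mul_mul_pow_mul_exp_neg_eq_add_mul (m : ℕ) (hP : 0 < P) :
    ∫ x in Ioi 0, log (1 + P * x) * (x ^ m * exp (-x))
      = (∫ x in Ioi 0, x ^ m / (x + P⁻¹) * exp (-x))
        + m * ∫ x in Ioi 0, log (1 + P * x) * (x ^ (m - 1) * exp (-x)) := by
  have hderiv : ∀ x ∈ Ici (0 : ℝ), HasDerivAt (fun x => log (1 + P * x) * (x ^ m * exp (-x)))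
      (x ^ m / (x + P⁻¹) * exp (-x) + (m * (log (1 + P * x) * (x ^ (m - 1) * exp (-x)))
        - log (1 + P * x) * (x ^ m * exp (-x)))) x := by
    intro x (hx : 0 ≤ x)
    have hlog := (((hasDerivAt_id' x).const_mul P).const_add 1).log (by positivity)
    refine (hlog.fun_mul ((hasDerivAt_pow m x).fun_mul (hasDerivAt_neg x).exp)).congr_deriv ?_
    field_simp
    ring
  have hint₀ := integrableOn_pow_div_add_mul_exp_neg m (inv_pos.2 hP)
  have hint₁ : IntegrableOn (fun x => m * (log (1 + P * x) * (x ^ (m - 1) * exp (-x)))) (Ioi 0) :=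
    (integrableOn_log_one_add_mul_mul_pow_mul_exp_neg (m - 1) hP.le).const_mul _
  have hint₂ := integrableOn_log_one_add_mul_mul_pow_mul_exp_neg m hP.le
  have hint : IntegrableOn (fun x => m * (log (1 + P * x) * (x ^ (m - 1) * exp (-x)))
      - log (1 + P * x) * (x ^ m * exp (-x))) (Ioi 0) := hint₁.sub hint₂
  have hlim : Tendsto (fun x => log (1 + P * x) * (x ^ m * exp (-x))) atTop (𝓝 0) := by
    refine squeeze_zero_norm' ?_
      ((tendsto_pow_mul_exp_neg_atTop_nhds_zero (m + 1)).const_mul P |>.trans (by simp))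
    filter_upwards [eventually_ge_atTop 0] with x hx
    exact norm_log_one_add_mul_mul_pow_mul_exp_neg_le m hP.le hx
  have h := integral_Ioi_of_hasDerivAt_of_tendsto' hderiv (hint₀.add hint) hlim
  rw [integral_add hint₀ hint, integral_sub hint₁ hint₂, integral_const_mul] at h
  simp only [mul_zero, add_zero, log_one, zero_mul, sub_zero] at h
  linarith

lemma integral_log_one_add_mul_mul_pow_mul_exp_neg (m : ℕ) (hP : 0 < P) :
    ∫ x in Ioi 0, log (1 + P * x) * (x ^ m * exp (-x))
      = m ! * ∑ k ∈ Finset.range (m + 1), exp P⁻¹ * P⁻¹ ^ k * upperIncGammaNegInt k P⁻¹ := by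
  have hT (k : ℕ) := integral_pow_div_add_mul_exp_neg k (inv_pos.2 hP)
  induction m with
  | zero =>
    rw [integral_log_one_add_mul_mul_pow_mul_exp_neg_eq_add_mul 0 hP, hT]
    simp
  | succ m ih =>
    rw [integral_log_one_add_mul_mul_pow_mul_exp_neg_eq_add_mul (m + 1) hP, Nat.add_sub_cancel,
      ih, hT, Finset.sum_range_succ _ (m + 1), Nat.factorial_succ]
    push_cast
    ring

end LogIntegral

lemma integral_comp_of_map_eq_withDensity_gamma {Ω : Type*} [MeasurableSpace Ω] {μ : Measure Ω}
    {X : Ω → ℝ} (m : ℕ) (hX : μ.map X = volume.withDensity (fun x =>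
      ENNReal.ofReal (if 0 ≤ x then x ^ m * exp (-x) / m ! else 0)))
    {f : ℝ → ℝ} (hf : Measurable f) :
    ∫ ω, f (X ω) ∂μ = (m ! : ℝ)⁻¹ * ∫ x in Ioi 0, f x * (x ^ m * exp (-x)) := by
  set ρ : ℝ → ℝ := fun x => if 0 ≤ x then x ^ m * exp (-x) / m ! else 0
  have hρ : Measurable ρ := Measurable.ite measurableSet_Ici (by fun_prop) measurable_const
  have hρ_nonneg (x : ℝ) : 0 ≤ ρ x := by
    simp only [ρ]
    split_ifs <;> positivity
  -- `Measure.map` along a map that is not a.e.-measurable is `0`, and this law is not `0`.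
  have hX_meas : AEMeasurable X μ := by
    refine .of_map_ne_zero fun h => ?_
    rw [hX, withDensity_eq_zero_iff hρ.ennreal_ofReal.aemeasurable] at h
    have : volume (Ioi (0 : ℝ)) = 0 := by
      refine measure_mono_null (fun x (hx : 0 < x) => ?_) (ae_iff.1 h)
      simp only [mem_ofPred_eq, Pi.zero_apply, ENNReal.ofReal_eq_zero, not_le, ρ, if_pos hx.le]
      positivity
    simp at this
  rw [← integral_map hX_meas hf.aestronglyMeasurable, hX,
    integral_withDensity_eq_integral_toReal_smul hρ.ennreal_ofReal
      (.of_forall fun _ => ENNReal.ofReal_lt_top),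
    ← setIntegral_eq_integral_of_forall_compl_eq_zero (s := Ici 0) ?_,
    integral_Ici_eq_integral_Ioi, ← integral_const_mul]
  · refine setIntegral_congr_fun measurableSet_Ioi fun x (hx : 0 < x) => ?_
    rw [ENNReal.toReal_ofReal (hρ_nonneg x), smul_eq_mul]
    simp only [ρ, hx.le, if_true]
    ring
  · intro x (hx : ¬ 0 ≤ x)
    simp [ρ, hx]

theorem bf_ergodic_capacity_general
    {Ω : Type*} [MeasureSpace Ω]
    (Nt : ℕ) (hNt : 1 ≤ Nt) (P : ℝ) (hP : 0 < P)
    (G : Ω → ℝ)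
    (hG : Measure.map G ℙ = volume.withDensity (fun x =>
        ENNReal.ofReal (if 0 ≤ x then
          x ^ (Nt - 1) * Real.exp (-x) / (Nat.factorial (Nt - 1)) else 0))) :
    ∫ ω, logb 2 (1 + P * G ω) ∂ℙ
      = logb 2 (Real.exp 1) * Real.exp (1 / P) *
          ∑ k ∈ Finset.range Nt, upperIncGammaNegInt k (1 / P) / P ^ k := by
  obtain ⟨m, rfl⟩ : ∃ m, Nt = m + 1 := ⟨Nt - 1, by omega⟩
  rw [Nat.add_sub_cancel] at hG
  have hlogb : Measurable fun x => logb 2 (1 + P * x) := by unfold logb; fun_prop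
  rw [integral_comp_of_map_eq_withDensity_gamma m hG hlogb]
  simp only [logb, log_exp, div_mul_eq_mul_div, integral_div,
    integral_log_one_add_mul_mul_pow_mul_exp_neg m hP, Finset.mul_sum, Finset.sum_div, one_div]
  refine Finset.sum_congr rfl fun k _ => ?_
  rw [inv_pow]
  field_simp

/-- Ergodic capacity of eigen-beamforming over i.i.d. Rayleigh fading:
if `G = ‖h‖² ~ Gamma(N_t, 1)` then
`E[log₂(1 + P G)] = log₂(e) e^{1/P} ∑_{k=0}^{N_t-1} Γ(-k, 1/P)/P^k`. -/
theorem bf_ergodic_capacity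
    {Ω : Type*} [MeasureSpace Ω] [IsProbabilityMeasure (ℙ : Measure Ω)]
    (Nt : ℕ) (hNt : 1 ≤ Nt) (P : ℝ) (hP : 0 < P)
    (G : Ω → ℝ)
    (hG : Measure.map G ℙ = volume.withDensity (fun x =>
        ENNReal.ofReal (if 0 ≤ x then
          x ^ (Nt - 1) * Real.exp (-x) / (Nat.factorial (Nt - 1)) else 0))) :
    ∫ ω, logb 2 (1 + P * G ω) ∂ℙ
      = logb 2 (Real.exp 1) * Real.exp (1 / P) *
          ∑ k ∈ Finset.range Nt, upperIncGammaNegInt k (1 / P) / P ^ k :=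
  bf_ergodic_capacity_general Nt hNt P hP G hG
end

section
/- If γ is exponentially distributed with mean P/U (i.e., γ = (P/U)·Z with Z ~ Exp(1)), then E[log₂(1+γ)] = log₂(e) · e^{U/P} · E₁(U/P), where E₁ is the exponential integral of the first order. -/
/-!
Writing `c = U/P`, the law of `γ` is the exponential distribution of rate `c`, so the expectation
is `(log 2)⁻¹ ∫₀^∞ c e^{-cx} log(1+x) dx`. Integrating by parts (the boundary terms vanish since
`log(1+x) ≤ x`) turns `c ∫₀^∞ e^{-cx} log(1+x) dx` into `∫₀^∞ e^{-cx}/(1+x) dx`, and the shift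
`t = 1 + x` identifies the latter with `e^c E₁(c)`.
-/

open MeasureTheory ProbabilityTheory Real Set
open scoped ProbabilityTheory

/-- The first-order exponential integral `E₁ z = ∫₁^∞ e^{-z t}/t dt`. -/
noncomputable def expIntE1 (z : ℝ) : ℝ := ∫ t in Ioi (1 : ℝ), Real.exp (-z * t) / t

open Filter Topology

lemma hasDerivAt_log_one_add_mul_exp_neg_mul (c : ℝ) {x : ℝ} (hx : 1 + x ≠ 0) :
    HasDerivAt (fun y => log (1 + y) * exp (-c * y))
      (exp (-c * x) / (1 + x) - c * (log (1 + x) * exp (-c * x))) x := by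
  refine ((((hasDerivAt_id' x).const_add 1).log hx).fun_mul
    ((hasDerivAt_id' x).const_mul (-c)).exp).congr_deriv ?_
  ring

lemma log_one_add_mul_exp_neg_le {c x : ℝ} (hx : 0 ≤ x) :
    log (1 + x) * exp (-c * x) ≤ x * exp (-c * x) := by
  gcongr
  linarith [log_le_sub_one_of_pos (by linarith : 0 < 1 + x)]

lemma integrableOn_log_one_add_mul_exp_neg_mul {c : ℝ} (hc : 0 < c) :
    IntegrableOn (fun x => log (1 + x) * exp (-c * x)) (Ioi 0) := by
  have hdom : IntegrableOn (fun x => x * exp (-c * x)) (Ioi 0) := by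
    simpa using integrableOn_rpow_mul_exp_neg_mul_rpow (s := 1) (p := 1) (by norm_num) one_pos hc
  refine hdom.mono' (by fun_prop)
    ((ae_restrict_mem measurableSet_Ioi).mono fun x (hx : 0 < x) => ?_)
  rw [norm_of_nonneg (by have := log_nonneg (by linarith : 1 ≤ 1 + x); positivity)]
  exact log_one_add_mul_exp_neg_le hx.le

lemma integrableOn_exp_neg_mul_div_one_add {c : ℝ} (hc : 0 < c) :
    IntegrableOn (fun x => exp (-c * x) / (1 + x)) (Ioi 0) := by
  refine (exp_neg_integrableOn_Ioi 0 hc).mono' (Measurable.aestronglyMeasurable (by fun_prop))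
    ((ae_restrict_mem measurableSet_Ioi).mono fun x (hx : 0 < x) => ?_)
  rw [norm_of_nonneg (by positivity), neg_mul]
  exact div_le_self (by positivity) (by linarith)

lemma tendsto_log_one_add_mul_exp_neg_mul {c : ℝ} (hc : 0 < c) :
    Tendsto (fun x => log (1 + x) * exp (-c * x)) atTop (𝓝 0) := by
  refine squeeze_zero' ((eventually_ge_atTop 0).mono fun x hx => ?_)
    ((eventually_ge_atTop 0).mono fun x hx => log_one_add_mul_exp_neg_le hx) ?_
  · have := log_nonneg (by linarith : 1 ≤ 1 + x); positivity
  · simpa using tendsto_rpow_mul_exp_neg_mul_atTop_nhds_zero 1 c hc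

lemma mul_integral_log_one_add_mul_exp_neg_mul {c : ℝ} (hc : 0 < c) :
    c * ∫ x in Ioi 0, log (1 + x) * exp (-c * x) = ∫ x in Ioi 0, exp (-c * x) / (1 + x) := by
  have hftc := integral_Ioi_of_hasDerivAt_of_tendsto'
    (fun x (hx : 0 ≤ x) => hasDerivAt_log_one_add_mul_exp_neg_mul c (by linarith))
    ((integrableOn_exp_neg_mul_div_one_add hc).sub
      ((integrableOn_log_one_add_mul_exp_neg_mul hc).const_mul c))
    (tendsto_log_one_add_mul_exp_neg_mul hc)
  rw [integral_sub (integrableOn_exp_neg_mul_div_one_add hc)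
    ((integrableOn_log_one_add_mul_exp_neg_mul hc).const_mul c), integral_const_mul] at hftc
  simp only [add_zero, log_one, zero_mul, sub_zero] at hftc
  linarith

lemma integral_exp_neg_mul_div_one_add (c : ℝ) :
    ∫ x in Ioi 0, exp (-c * x) / (1 + x) = exp c * expIntE1 c := by
  have hshift := (measurePreserving_add_right volume (1 : ℝ)).setIntegral_preimage_emb
    (MeasurableEquiv.addRight (1 : ℝ)).measurableEmbedding (fun t => exp (-c * t) / t) (Ioi 1)
  rw [expIntE1, ← hshift, preimage_add_const_Ioi, sub_self, ← integral_const_mul]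
  refine setIntegral_congr_fun measurableSet_Ioi fun x _ => ?_
  rw [mul_add, mul_one, ← mul_div_assoc, ← exp_add, add_comm x]
  ring_nf

lemma integral_expMeasure {r : ℝ} (hr : 0 < r) (f : ℝ → ℝ) :
    ∫ x, f x ∂expMeasure r = ∫ x in Ioi 0, r * exp (-r * x) * f x := by
  have hpdf : Measurable (exponentialPDF r) := (measurable_exponentialPDFReal r).ennreal_ofReal
  rw [show expMeasure r = volume.withDensity (exponentialPDF r) from rfl,
    integral_withDensity_eq_integral_toReal_smul hpdf
    (ae_of_all _ fun _ => ENNReal.ofReal_lt_top), ← integral_Ici_eq_integral_Ioi,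
    ← setIntegral_eq_integral_of_forall_compl_eq_zero (s := Ici 0) fun x hx => ?_]
  · refine setIntegral_congr_fun measurableSet_Ici fun x (hx : 0 ≤ x) => ?_
    rw [exponentialPDF_of_nonneg hx, ENNReal.toReal_ofReal (by positivity), smul_eq_mul, neg_mul]
  · rw [exponentialPDF_of_neg (not_le.1 hx), ENNReal.toReal_zero, zero_smul]

lemma hasLaw_expMeasure {Ω : Type*} [MeasurableSpace Ω] {μ : Measure Ω} {r : ℝ} (hr : 0 < r)
    {X : Ω → ℝ} (hX : μ.map X = volume.withDensity
      (fun x => ENNReal.ofReal (if 0 ≤ x then r * exp (-r * x) else 0))) :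
    HasLaw X (expMeasure r) μ := by
  have hmap : μ.map X = expMeasure r := by
    simp_rw [hX, neg_mul, ← exponentialPDF_eq]; rfl
  -- `Measure.map` of a non-a.e.-measurable function is `0`, which a probability measure is not.
  exact ⟨.of_map_ne_zero (hmap ▸ (isProbabilityMeasure_expMeasure hr).ne_zero), hmap⟩

theorem zf_per_user_rate_general
    {Ω : Type*} [MeasureSpace Ω]
    (P U : ℝ) (hP : 0 < P) (hU : 0 < U)
    (γ : Ω → ℝ)
    (hγ : Measure.map γ ℙ = volume.withDensity (fun x =>
        ENNReal.ofReal (if 0 ≤ x then (U / P) * Real.exp (-(U / P) * x) else 0))) :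
    ∫ ω, logb 2 (1 + γ ω) ∂ℙ
      = logb 2 (Real.exp 1) * Real.exp (U / P) * expIntE1 (U / P) := by
  set c := U / P
  have hc : 0 < c := div_pos hU hP
  calc ∫ ω, logb 2 (1 + γ ω) ∂ℙ = ∫ x in Ioi 0, c * exp (-c * x) * logb 2 (1 + x) := by
        rw [← integral_expMeasure hc]
        exact (hasLaw_expMeasure hc hγ).integral_comp (f := fun x => logb 2 (1 + x))
          (Measurable.aestronglyMeasurable (by unfold logb; fun_prop))
    _ = (c * ∫ x in Ioi 0, log (1 + x) * exp (-c * x)) / log 2 := by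
        rw [← integral_const_mul, ← integral_div]
        congr 1 with x
        rw [logb]
        ring
    _ = logb 2 (exp 1) * exp c * expIntE1 c := by
        rw [mul_integral_log_one_add_mul_exp_neg_mul hc, integral_exp_neg_mul_div_one_add, logb,
          log_exp]
        ring

/-- If `γ` is exponentially distributed with mean `P/U` then
`E[log₂(1+γ)] = log₂(e) e^{U/P} E₁(U/P)`. -/
theorem zf_per_user_rate
    {Ω : Type*} [MeasureSpace Ω] [IsProbabilityMeasure (ℙ : Measure Ω)]
    (P U : ℝ) (hP : 0 < P) (hU : 0 < U)
    (γ : Ω → ℝ)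
    (hγ : Measure.map γ ℙ = volume.withDensity (fun x =>
        ENNReal.ofReal (if 0 ≤ x then (U / P) * Real.exp (-(U / P) * x) else 0))) :
    ∫ ω, logb 2 (1 + γ ω) ∂ℙ
      = logb 2 (Real.exp 1) * Real.exp (U / P) * expIntE1 (U / P) :=
  zf_per_user_rate_general P U hP hU γ hγ
end
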